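/- arXiv:1908.00996 — 7 statements merged into one kernel-verified Lean document; each statement's English description precedes it below -/
import Mathlib

section
/- Let V be a reflexive real Banach space (the canonical embedding ι : V → V'' is surjective), let φ be a weight function and let φ⁻¹ : [0,∞) → [0,∞) denote its inverse function (which is again a weight function). Then the inverse of the duality mapping J_V^φ is the duality mapping on V' of weight φ⁻¹: for all v ∈ V and v* ∈ V', one has v* ∈ J_V^φ(v) if and only if ι(v) ∈ J_{V'}^{φ⁻¹}(v*). -/
/-- A weight function: continuous, strictly increasing on `[0,∞)`, vanishing at `0`,
mapping `[0,∞)` into `[0,∞)`, and tending to `∞` at `∞`. -/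
def IsWeightFun (φ : ℝ → ℝ) : Prop :=
  ContinuousOn φ (Set.Ici 0) ∧ StrictMonoOn φ (Set.Ici 0) ∧ φ 0 = 0 ∧
    (∀ t ∈ Set.Ici (0 : ℝ), 0 ≤ φ t) ∧ Filter.Tendsto φ Filter.atTop Filter.atTop

/-- The duality set of weight `φ` at `v`. -/
def dualitySet (V : Type*) [NormedAddCommGroup V] [NormedSpace ℝ V]
    (φ : ℝ → ℝ) (v : V) : Set (V →L[ℝ] ℝ) :=
  {f | f v = ‖v‖ * ‖f‖ ∧ ‖f‖ = φ ‖v‖}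

/-! Both conditions defining `J^φ` are symmetric in `v` and `v*` once `ι(v)(v*) = v*(v)` and
`‖ι(v)‖ = ‖v‖` are used, except `‖v*‖ = φ ‖v‖`, which is equivalent to `‖v‖ = φ⁻¹ ‖v*‖`
because both norms lie in `[0,∞)`, where `φ` and `φ⁻¹` are mutually inverse. -/

theorem Set.InvOn.eq_apply_iff {α β : Type*} {f : α → β} {g : β → α} {s : Set α} {t : Set β}
    (h : Set.InvOn g f s t) {x : α} {y : β} (hx : x ∈ s) (hy : y ∈ t) :
    y = f x ↔ x = g y := by
  constructor
  · rintro rfl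
    exact (h.1 hx).symm
  · rintro rfl
    exact (h.2 hy).symm

theorem inclusionInDoubleDual_mem_dualitySet_iff {V : Type*} [NormedAddCommGroup V]
    [NormedSpace ℝ V] (ψ : ℝ → ℝ) (v : V) (f : V →L[ℝ] ℝ) :
    NormedSpace.inclusionInDoubleDual ℝ V v ∈ dualitySet (V →L[ℝ] ℝ) ψ f ↔
      f v = ‖v‖ * ‖f‖ ∧ ‖v‖ = ψ ‖f‖ := by
  have hnorm : ‖NormedSpace.inclusionInDoubleDual ℝ V v‖ = ‖v‖ :=
    (NormedSpace.inclusionInDoubleDualLi ℝ).norm_map v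
  simp only [dualitySet, Set.mem_ofPred_eq, NormedSpace.dual_def, hnorm, mul_comm ‖f‖]

theorem statement8_general {V : Type*} [NormedAddCommGroup V] [NormedSpace ℝ V]
    (φ φinv : ℝ → ℝ)
    (hinv₁ : ∀ t ∈ Set.Ici (0 : ℝ), φinv (φ t) = t)
    (hinv₂ : ∀ t ∈ Set.Ici (0 : ℝ), φ (φinv t) = t)
    (v : V) (f : V →L[ℝ] ℝ) :
    f ∈ dualitySet V φ v ↔
      NormedSpace.inclusionInDoubleDual ℝ V v ∈ dualitySet (V →L[ℝ] ℝ) φinv f := by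
  have hinv : Set.InvOn φinv φ (Set.Ici 0) (Set.Ici 0) := ⟨hinv₁, hinv₂⟩
  rw [inclusionInDoubleDual_mem_dualitySet_iff]
  exact and_congr_right fun _ ↦ hinv.eq_apply_iff (norm_nonneg v) (norm_nonneg f)

/-- For a reflexive real Banach space `V` and a weight function `φ` with inverse weight
function `φinv`, the inverse of the duality mapping `J_V^φ` is the duality mapping on the
dual `V'` of weight `φ⁻¹`: `v* ∈ J_V^φ(v)` iff `ι(v) ∈ J_{V'}^{φ⁻¹}(v*)`, where `ι` is the
canonical embedding of `V` into its bidual. -/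
theorem statement8 {V : Type*} [NormedAddCommGroup V] [NormedSpace ℝ V] [CompleteSpace V]
    (hrefl : Function.Surjective ⇑(NormedSpace.inclusionInDoubleDual ℝ V))
    (φ φinv : ℝ → ℝ) (hφ : IsWeightFun φ) (hφinv : IsWeightFun φinv)
    (hinv₁ : ∀ t ∈ Set.Ici (0 : ℝ), φinv (φ t) = t)
    (hinv₂ : ∀ t ∈ Set.Ici (0 : ℝ), φ (φinv t) = t)
    (v : V) (f : V →L[ℝ] ℝ) :
    f ∈ dualitySet V φ v ↔
      NormedSpace.inclusionInDoubleDual ℝ V v ∈ dualitySet (V →L[ℝ] ℝ) φinv f :=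
  statement8_general φ φinv hinv₁ hinv₂ v f
end

section
/- (Asplund's theorem) Let V be a real normed space, let φ be a weight function, set ψ(s) := ∫₀^s φ(t) dt and define F : V → ℝ by F(v) := ψ(‖v‖). Then for every v ∈ V the duality set J_V^φ(v) coincides with the subdifferential of F at v: a functional v* ∈ V' satisfies v*(v) = ‖v‖·‖v*‖ and ‖v*‖ = φ(‖v‖) if and only if F(w) ≥ F(v) + v*(w - v) for all w ∈ V. -/
open Set Filter Topology MeasureTheory intervalIntegral

private lemma asp_intable {φ : ℝ → ℝ} (hc : ContinuousOn φ (Set.Ici 0))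
    {x y : ℝ} (hx : 0 ≤ x) (hy : 0 ≤ y) : IntervalIntegrable φ volume x y :=
  (hc.mono fun t ht => le_trans (le_min hx hy) ht.1).intervalIntegrable

private lemma asp_sub {φ : ℝ → ℝ} (hc : ContinuousOn φ (Set.Ici 0))
    {b c : ℝ} (hb : 0 ≤ b) (hcc : 0 ≤ c) :
    (∫ t in (0:ℝ)..c, φ t) - ∫ t in (0:ℝ)..b, φ t = ∫ t in b..c, φ t :=
  intervalIntegral.integral_interval_sub_left (asp_intable hc le_rfl hcc)
    (asp_intable hc le_rfl hb)

private lemma asp_upper {φ : ℝ → ℝ} (hc : ContinuousOn φ (Set.Ici 0))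
    (hm : MonotoneOn φ (Set.Ici 0)) {b c : ℝ} (hb : 0 ≤ b) (hbc : b ≤ c) :
    (∫ t in (0:ℝ)..c, φ t) - ∫ t in (0:ℝ)..b, φ t ≤ φ c * (c - b) := by
  rw [asp_sub hc hb (hb.trans hbc)]
  have h := intervalIntegral.integral_mono_on hbc (asp_intable hc hb (hb.trans hbc))
    (_root_.intervalIntegrable_const (c := φ c))
    (fun t ht => hm (le_trans hb ht.1) (hb.trans hbc) ht.2)
  simpa [intervalIntegral.integral_const, mul_comm] using h

private lemma asp_lower {φ : ℝ → ℝ} (hc : ContinuousOn φ (Set.Ici 0))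
    (hm : MonotoneOn φ (Set.Ici 0)) {b c : ℝ} (hb : 0 ≤ b) (hbc : b ≤ c) :
    φ b * (c - b) ≤ (∫ t in (0:ℝ)..c, φ t) - ∫ t in (0:ℝ)..b, φ t := by
  rw [asp_sub hc hb (hb.trans hbc)]
  have h := intervalIntegral.integral_mono_on hbc
    (_root_.intervalIntegrable_const (c := φ b)) (asp_intable hc hb (hb.trans hbc))
    (fun t ht => hm hb (le_trans hb ht.1) ht.1)
  simpa [intervalIntegral.integral_const, mul_comm] using h

private lemma asp_mono {φ : ℝ → ℝ} (hc : ContinuousOn φ (Set.Ici 0))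
    (hm : MonotoneOn φ (Set.Ici 0)) (hnn : ∀ t ∈ Set.Ici (0:ℝ), 0 ≤ φ t)
    {b c : ℝ} (hb : 0 ≤ b) (hbc : b ≤ c) :
    (∫ t in (0:ℝ)..b, φ t) ≤ ∫ t in (0:ℝ)..c, φ t := by
  have h := asp_lower hc hm hb hbc
  nlinarith [hnn b hb]

/-- Asplund's theorem: for a weight function `φ`, `ψ(s) = ∫₀^s φ(t) dt` and
`F(v) = ψ(‖v‖)`, the duality set `J_V^φ(v)` coincides with the subdifferential of `F`
at `v`. -/
theorem statement9 {V : Type*} [NormedAddCommGroup V] [NormedSpace ℝ V]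
    (φ : ℝ → ℝ) (hφ : IsWeightFun φ)
    (F : V → ℝ) (hF : ∀ u : V, F u = ∫ t in (0 : ℝ)..‖u‖, φ t)
    (v : V) (f : V →L[ℝ] ℝ) :
    (f v = ‖v‖ * ‖f‖ ∧ ‖f‖ = φ ‖v‖) ↔ ∀ w : V, F v + f (w - v) ≤ F w := by
  obtain ⟨hc, hsm, h0, hnn, -⟩ := hφ
  have hm : MonotoneOn φ (Set.Ici 0) := hsm.monotoneOn
  have ha : (0:ℝ) ≤ ‖v‖ := norm_nonneg v
  constructor
  · rintro ⟨h1, h2⟩ w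
    rw [hF, hF]
    have hs : (0:ℝ) ≤ ‖w‖ := norm_nonneg w
    have key : φ ‖v‖ * (‖w‖ - ‖v‖) ≤
        (∫ t in (0:ℝ)..‖w‖, φ t) - ∫ t in (0:ℝ)..‖v‖, φ t := by
      rcases le_total ‖v‖ ‖w‖ with hle | hle
      · exact asp_lower hc hm ha hle
      · have := asp_upper hc hm hs hle
        linarith
    have hfw : f w ≤ ‖f‖ * ‖w‖ := (le_abs_self _).trans (f.le_opNorm w)
    have hfs : f (w - v) = f w - f v := map_sub f w v
    rw [hfs, h1, h2]
    nlinarith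
  · intro h
    -- upper bound on the norm
    have hb : ∀ t : ℝ, 0 < t → ∀ x : V, f x ≤ φ (‖v‖ + t) * ‖x‖ := by
      intro t ht x
      have hphinn : 0 ≤ φ (‖v‖ + t) := hnn _ (Set.mem_Ici.mpr (by positivity))
      by_cases hx : x = 0
      · simp [hx]
      · have hxn : 0 < ‖x‖ := norm_pos_iff.mpr hx
        have hw := h (v + (t / ‖x‖) • x)
        rw [hF, hF] at hw
        have hfl : f (v + (t / ‖x‖) • x - v) = (t / ‖x‖) * f x := by
          rw [add_sub_cancel_left, f.map_smul, smul_eq_mul]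
        have hnw : ‖v + (t / ‖x‖) • x‖ ≤ ‖v‖ + t := by
          calc ‖v + (t / ‖x‖) • x‖ ≤ ‖v‖ + ‖(t / ‖x‖) • x‖ := norm_add_le _ _
            _ = ‖v‖ + (t / ‖x‖) * ‖x‖ := by
                rw [norm_smul, Real.norm_eq_abs, abs_of_pos (by positivity)]
            _ = ‖v‖ + t := by rw [div_mul_cancel₀ _ (ne_of_gt hxn)]
        have hmono := asp_mono hc hm hnn (norm_nonneg _) hnw
        have hupper := asp_upper hc hm ha (by linarith : ‖v‖ ≤ ‖v‖ + t)
        have h1 : t / ‖x‖ * f x ≤ φ (‖v‖ + t) * (‖v‖ + t - ‖v‖) := by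
          rw [hfl] at hw; linarith
        have h2 : t * f x ≤ t * (φ (‖v‖ + t) * ‖x‖) := by
          rw [div_mul_eq_mul_div, div_le_iff₀ hxn] at h1
          calc t * f x ≤ φ (‖v‖ + t) * (‖v‖ + t - ‖v‖) * ‖x‖ := h1
            _ = t * (φ (‖v‖ + t) * ‖x‖) := by ring
        exact le_of_mul_le_mul_left h2 ht
    have htend : Tendsto (fun t : ℝ => ‖v‖ + t) (𝓝[>] 0) (𝓝[Set.Ici 0] ‖v‖) := by
      apply tendsto_nhdsWithin_of_tendsto_nhds_of_eventually_within
      · have : Tendsto (fun t : ℝ => ‖v‖ + t) (𝓝 0) (𝓝 ‖v‖) := by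
          simpa using (continuous_add_left ‖v‖).tendsto (0:ℝ)
        exact this.mono_left nhdsWithin_le_nhds
      · filter_upwards [self_mem_nhdsWithin] with t ht
        exact add_nonneg ha (le_of_lt ht)
    have hcwa : Tendsto φ (𝓝[Set.Ici 0] ‖v‖) (𝓝 (φ ‖v‖)) := hc _ ha
    have htend2 : Tendsto (fun t : ℝ => φ (‖v‖ + t)) (𝓝[>] 0) (𝓝 (φ ‖v‖)) :=
      hcwa.comp htend
    have hxle : ∀ x : V, f x ≤ φ ‖v‖ * ‖x‖ := by
      intro x
      refine ge_of_tendsto (htend2.mul_const ‖x‖) ?_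
      filter_upwards [self_mem_nhdsWithin] with t ht
      exact hb t ht x
    have hphinn : 0 ≤ φ ‖v‖ := hnn _ ha
    have hnorm : ‖f‖ ≤ φ ‖v‖ := by
      refine f.opNorm_le_bound hphinn fun x => ?_
      rw [Real.norm_eq_abs]
      refine abs_le.mpr ⟨?_, hxle x⟩
      have := hxle (-x)
      simp only [map_neg, norm_neg] at this
      linarith
    -- lower bound on f v
    have hlow : φ ‖v‖ * ‖v‖ ≤ f v := by
      rcases eq_or_lt_of_le ha with h0' | h0'
      · have hv0 : v = 0 := norm_eq_zero.mp h0'.symm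
        simp [hv0, ← h0', h0]
      · have key : ∀ ε ∈ Set.Ioo (0:ℝ) 1, φ (‖v‖ - ε * ‖v‖) * ‖v‖ ≤ f v := by
          intro ε hε
          have hw := h ((1 - ε) • v)
          rw [hF, hF] at hw
          have hnw : ‖(1 - ε) • v‖ = (1 - ε) * ‖v‖ := by
            rw [norm_smul, Real.norm_eq_abs, abs_of_pos (by linarith [hε.2])]
          have hfl : f ((1 - ε) • v - v) = -ε * f v := by
            have hv : (1 - ε) • v - v = (-ε) • v := by module
            rw [hv, f.map_smul, smul_eq_mul]
          have hbnn : (0:ℝ) ≤ (1 - ε) * ‖v‖ := by nlinarith [hε.1, hε.2]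
          have hbc : (1 - ε) * ‖v‖ ≤ ‖v‖ := by nlinarith [hε.1]
          have hlint := asp_lower hc hm hbnn hbc
          rw [hnw, hfl] at hw
          have h3 : ε * (φ ((1 - ε) * ‖v‖) * ‖v‖) ≤ ε * f v := by
            nlinarith
          have h4 := le_of_mul_le_mul_left h3 hε.1
          have he : ‖v‖ - ε * ‖v‖ = (1 - ε) * ‖v‖ := by ring
          rw [he]; exact h4
        have hIoo : Set.Ioo (0:ℝ) 1 ∈ 𝓝[>] (0:ℝ) :=
          Ioo_mem_nhdsGT_of_mem ⟨le_refl 0, one_pos⟩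
        have htendl : Tendsto (fun ε : ℝ => φ (‖v‖ - ε * ‖v‖) * ‖v‖) (𝓝[>] 0)
            (𝓝 (φ ‖v‖ * ‖v‖)) := by
          have hmap : Tendsto (fun ε : ℝ => ‖v‖ - ε * ‖v‖) (𝓝[>] 0)
              (𝓝[Set.Ici 0] ‖v‖) := by
            apply tendsto_nhdsWithin_of_tendsto_nhds_of_eventually_within
            · have hcont : Continuous (fun ε : ℝ => ‖v‖ - ε * ‖v‖) := by continuity
              have : Tendsto (fun ε : ℝ => ‖v‖ - ε * ‖v‖) (𝓝 0) (𝓝 ‖v‖) := by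
                simpa using hcont.tendsto (0:ℝ)
              exact this.mono_left nhdsWithin_le_nhds
            · filter_upwards [hIoo] with ε hε
              have : ε * ‖v‖ ≤ ‖v‖ := by nlinarith [hε.1, hε.2]
              simpa [Set.mem_Ici] using by linarith
          exact (hcwa.comp hmap).mul_const ‖v‖
        refine le_of_tendsto htendl ?_
        filter_upwards [hIoo] with ε hε
        exact key ε hε
    have hup : f v ≤ ‖f‖ * ‖v‖ := (le_abs_self _).trans (f.le_opNorm v)
    have hlow2 : φ ‖v‖ ≤ ‖f‖ := by
      rcases eq_or_lt_of_le ha with h0' | h0'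
      · rw [← h0', h0]; exact norm_nonneg f
      · have : φ ‖v‖ * ‖v‖ ≤ ‖f‖ * ‖v‖ := le_trans hlow hup
        exact le_of_mul_le_mul_right (by nlinarith) h0'
    have heq : ‖f‖ = φ ‖v‖ := le_antisymm hnorm hlow2
    rw [heq] at hup
    exact ⟨by rw [heq]; linarith [mul_comm ‖v‖ (φ ‖v‖)], heq⟩
end

section
/- Let V be a real Banach space whose continuous dual V' is uniformly convex, let φ be a weight function, set ψ(s) := ∫₀^s φ(t) dt and define F : V → ℝ by F(v) := ψ(‖v‖). Then F is Fréchet differentiable at every v ∈ V and its Fréchet derivative at v is the (unique) element of the duality set J_V^φ(v): there exists v* ∈ V' with v*(v) = ‖v‖·‖v*‖, ‖v*‖ = φ(‖v‖), and F(v + h) - F(v) - v*(h) = o(‖h‖) as h → 0. -/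
open Filter Asymptotics

/-- Norm is Fréchet differentiable at `v ≠ 0` when the dual is uniformly convex,
with derivative the support functional. -/
lemma norm_hasFDerivAt_of_uniformConvex_dual {V : Type*} [NormedAddCommGroup V]
    [NormedSpace ℝ V] [UniformConvexSpace (V →L[ℝ] ℝ)]
    (v : V) (hv : v ≠ 0) (g : V →L[ℝ] ℝ) (hg1 : ‖g‖ = 1) (hgv : g v = ‖v‖) :
    HasFDerivAt (fun u : V => ‖u‖) g v := by
  rw [hasFDerivAt_iff_isLittleO_nhds_zero, isLittleO_iff]
  intro c hc
  obtain ⟨δ, hδ, hδ'⟩ :=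
    exists_forall_closed_ball_dist_add_le_two_sub (V →L[ℝ] ℝ) hc
  have hvpos : (0 : ℝ) < ‖v‖ := norm_pos_iff.2 hv
  have hr : (0 : ℝ) < min ‖v‖ (δ * ‖v‖ / 2) := by positivity
  filter_upwards [Metric.ball_mem_nhds (0 : V) hr] with h hh
  rw [Metric.mem_ball, dist_zero_right] at hh
  have hh1 : ‖h‖ < ‖v‖ := lt_of_lt_of_le hh (min_le_left _ _)
  have hh2 : ‖h‖ < δ * ‖v‖ / 2 := lt_of_lt_of_le hh (min_le_right _ _)
  have hvh : v + h ≠ 0 := by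
    intro h0
    have : ‖v‖ ≤ ‖h‖ := by
      have : v = -h := by linear_combination (norm := abel) h0
      simp [this]
    linarith
  obtain ⟨gh, hgh1, hghvh⟩ := exists_dual_vector ℝ (v + h) (norm_ne_zero_iff.2 hvh)
  have hghvh' : gh (v + h) = ‖v + h‖ := by exact_mod_cast hghvh
  -- lower bound: expression is nonneg
  have key : ∀ (f : V →L[ℝ] ℝ) (x : V), f x ≤ ‖f‖ * ‖x‖ := fun f x =>
    (Real.le_norm_self _).trans (f.le_opNorm x)
  have hlow : 0 ≤ ‖v + h‖ - ‖v‖ - g h := by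
    have : g (v + h) ≤ ‖v + h‖ := by
      calc g (v + h) ≤ ‖g‖ * ‖v + h‖ := key g (v + h)
        _ = ‖v + h‖ := by rw [hg1, one_mul]
    have hgvh : g (v + h) = ‖v‖ + g h := by rw [map_add, hgv]
    linarith
  -- gh v is close to ‖v‖
  have hghv_le : gh v ≤ ‖v‖ := by
    calc gh v ≤ ‖gh‖ * ‖v‖ := key gh v
      _ = ‖v‖ := by rw [hgh1, one_mul]
  have hghh : gh h ≤ ‖h‖ := by
    calc gh h ≤ ‖gh‖ * ‖h‖ := key gh h
      _ = ‖h‖ := by rw [hgh1, one_mul]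
  have hghv_ge : ‖v‖ - 2 * ‖h‖ ≤ gh v := by
    have h1 : gh v = ‖v + h‖ - gh h := by rw [← hghvh', map_add]; ring
    have h2 : ‖v‖ ≤ ‖v + h‖ + ‖h‖ := by
      have := norm_add_le (v + h) (-h)
      simpa using this
    linarith
  -- ‖g + gh‖ is close to 2
  have hsum : 2 - δ < ‖g + gh‖ := by
    have h1 : (g + gh) v ≤ ‖g + gh‖ * ‖v‖ := key _ v
    have h2 : 2 * ‖v‖ - 2 * ‖h‖ ≤ (g + gh) v := by
      have : (g + gh) v = ‖v‖ + gh v := by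
        simp [ContinuousLinearMap.add_apply, hgv]
      linarith
    nlinarith
  -- uniform convexity ⇒ ‖g - gh‖ < c
  have hclose : ‖g - gh‖ < c := by
    by_contra hcon
    push_neg at hcon
    have := hδ' hg1.le hgh1.le hcon
    linarith
  -- upper bound
  have hup : ‖v + h‖ - ‖v‖ - g h ≤ c * ‖h‖ := by
    have h1 : ‖v + h‖ - ‖v‖ - g h = (gh - g) h + (gh v - ‖v‖) := by
      rw [← hghvh']
      simp only [ContinuousLinearMap.sub_apply, map_add]
      ring
    have h2 : (gh - g) h ≤ ‖g - gh‖ * ‖h‖ := by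
      have := key (gh - g) h
      rwa [norm_sub_rev] at this
    have h4 : ‖g - gh‖ * ‖h‖ ≤ c * ‖h‖ :=
      mul_le_mul_of_nonneg_right hclose.le (norm_nonneg h)
    linarith
  rw [Real.norm_eq_abs, abs_of_nonneg hlow]
  simpa using hup

/-- If `V` is a real Banach space with uniformly convex dual, `φ` a weight function,
`ψ(s) = ∫₀^s φ(t) dt` and `F(v) = ψ(‖v‖)`, then `F` is Fréchet differentiable at every
`v ∈ V` with derivative the element of the duality set `J_V^φ(v)`. -/
theorem statement10 {V : Type*} [NormedAddCommGroup V] [NormedSpace ℝ V] [CompleteSpace V]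
    [UniformConvexSpace (V →L[ℝ] ℝ)]
    (φ : ℝ → ℝ) (hφ : IsWeightFun φ)
    (F : V → ℝ) (hF : ∀ u : V, F u = ∫ t in (0 : ℝ)..‖u‖, φ t)
    (v : V) :
    ∃ f : V →L[ℝ] ℝ, f v = ‖v‖ * ‖f‖ ∧ ‖f‖ = φ ‖v‖ ∧ HasFDerivAt F f v := by
  obtain ⟨hcont, hmono, hzero, hnonneg, _⟩ := hφ
  by_cases hv : v = 0
  · -- derivative is 0 at 0
    subst hv
    refine ⟨0, by simp, by simp [hzero], ?_⟩
    rw [hasFDerivAt_iff_isLittleO_nhds_zero]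
    rw [isLittleO_iff]
    intro c hc
    -- φ(‖h‖) → 0 as h → 0
    have htend : Tendsto (fun h : V => φ ‖h‖) (nhds 0) (nhds 0) := by
      have h1 : Tendsto (fun h : V => ‖h‖) (nhds 0) (nhdsWithin 0 (Set.Ici 0)) := by
        apply tendsto_nhdsWithin_of_tendsto_nhds_of_eventually_within
        · simpa using tendsto_norm_zero
        · exact Eventually.of_forall fun h => norm_nonneg h
      have h2 : ContinuousWithinAt φ (Set.Ici 0) 0 :=
        hcont 0 (Set.self_mem_Ici)
      have := h2.tendsto.comp h1
      rwa [hzero] at this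
    have hev : ∀ᶠ h : V in nhds 0, φ ‖h‖ ≤ c :=
      htend.eventually (eventually_le_nhds hc)
    filter_upwards [hev] with h hh
    have hφh : 0 ≤ φ ‖h‖ := hnonneg _ (norm_nonneg h)
    have hint : IntervalIntegrable φ MeasureTheory.volume 0 ‖h‖ := by
      apply ContinuousOn.intervalIntegrable
      apply hcont.mono
      rw [Set.uIcc_of_le (norm_nonneg h)]
      exact fun t ht => ht.1
    have hFh : F (0 + h) - F 0 = ∫ t in (0:ℝ)..‖h‖, φ t := by
      rw [hF, hF]; simp
    have hF0 : 0 ≤ ∫ t in (0:ℝ)..‖h‖, φ t :=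
      intervalIntegral.integral_nonneg (norm_nonneg h)
        (fun t ht => hnonneg t ht.1)
    have hFle : (∫ t in (0:ℝ)..‖h‖, φ t) ≤ φ ‖h‖ * ‖h‖ := by
      have : (∫ t in (0:ℝ)..‖h‖, φ t) ≤ ∫ _ in (0:ℝ)..‖h‖, φ ‖h‖ := by
        apply intervalIntegral.integral_mono_on (norm_nonneg h) hint
          intervalIntegrable_const
        intro t ht
        rcases eq_or_lt_of_le ht.2 with h1 | h1
        · rw [h1]
        · exact (hmono ht.1 (norm_nonneg h) h1).le
      simpa [mul_comm] using this
    simp only [ContinuousLinearMap.zero_apply, sub_zero]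
    rw [hFh, Real.norm_eq_abs, abs_of_nonneg hF0]
    calc (∫ t in (0:ℝ)..‖h‖, φ t) ≤ φ ‖h‖ * ‖h‖ := hFle
      _ ≤ c * ‖h‖ := mul_le_mul_of_nonneg_right hh (norm_nonneg h)
  · -- v ≠ 0
    have hvpos : (0 : ℝ) < ‖v‖ := norm_pos_iff.2 hv
    obtain ⟨g, hg1, hgv⟩ := exists_dual_vector ℝ v (norm_ne_zero_iff.2 hv)
    have hgv' : g v = ‖v‖ := by exact_mod_cast hgv
    have hφv : 0 < φ ‖v‖ := by
      have := hmono Set.self_mem_Ici (norm_nonneg v) hvpos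
      rwa [hzero] at this
    have hnf : ‖φ ‖v‖ • g‖ = φ ‖v‖ := by
      rw [norm_smul (φ ‖v‖) g, hg1, Real.norm_eq_abs, abs_of_pos hφv, mul_one]
    refine ⟨φ ‖v‖ • g, ?_, hnf, ?_⟩
    · rw [ContinuousLinearMap.smul_apply, hgv', hnf, smul_eq_mul]
      ring
    · -- F = ψ ∘ norm
      have hFeq : F = (fun s => ∫ t in (0:ℝ)..s, φ t) ∘ (fun u : V => ‖u‖) :=
        funext fun u => hF u
      rw [hFeq]
      apply HasDerivAt.comp_hasFDerivAt
      · -- ψ has derivative φ ‖v‖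
        apply intervalIntegral.integral_hasDerivAt_right
        · apply ContinuousOn.intervalIntegrable
          apply hcont.mono
          rw [Set.uIcc_of_le (norm_nonneg v)]
          exact fun t ht => ht.1
        · exact (hcont.mono (Set.Ioi_subset_Ici le_rfl)).stronglyMeasurableAtFilter
            isOpen_Ioi _ hvpos
        · exact hcont.continuousAt (Ici_mem_nhds hvpos)
      · exact norm_hasFDerivAt_of_uniformConvex_dual v hv g hg1 hgv'
end

section
/- Let U and V be real normed spaces, let B : U → V' be a continuous linear operator, and let M, γ > 0 satisfy ‖Bw‖_{V'} ≤ M‖w‖_U and γ‖w‖_U ≤ ‖Bw‖_{V'} for all w ∈ U. Let ℓ ∈ V' and u ∈ U with Bu = ℓ, let U_n ⊆ U be a subspace, and let u_n ∈ U_n be a residual minimizer over U_n, i.e. ‖ℓ - Bu_n‖_{V'} ≤ ‖ℓ - Bw_n‖_{V'} for all w_n ∈ U_n. Then u_n is a quasi-best approximation of u: ‖u - u_n‖_U ≤ (M/γ)·‖u - w_n‖_U for every w_n ∈ U_n. -/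
theorem mul_norm_sub_le_of_norm_residual_le {F U W : Type*} [SeminormedAddCommGroup U]
    [SeminormedAddCommGroup W] [FunLike F U W] [AddMonoidHomClass F U W] (B : F) {M γ : ℝ}
    (hbound : ∀ w : U, ‖B w‖ ≤ M * ‖w‖) (hbelow : ∀ w : U, γ * ‖w‖ ≤ ‖B w‖)
    {ℓ : W} {u un w : U} (hu : B u = ℓ) (hres : ‖ℓ - B un‖ ≤ ‖ℓ - B w‖) :
    γ * ‖u - un‖ ≤ M * ‖u - w‖ :=
  calc γ * ‖u - un‖ ≤ ‖B (u - un)‖ := hbelow _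
    _ = ‖ℓ - B un‖ := by rw [map_sub, hu]
    _ ≤ ‖ℓ - B w‖ := hres
    _ = ‖B (u - w)‖ := by rw [map_sub, hu]
    _ ≤ M * ‖u - w‖ := hbound _

theorem statement11_general {U V : Type*} [NormedAddCommGroup U] [NormedSpace ℝ U]
    [NormedAddCommGroup V] [NormedSpace ℝ V]
    (B : U →L[ℝ] V →L[ℝ] ℝ) (M γ : ℝ) (hγ : 0 < γ)
    (hbound : ∀ w : U, ‖B w‖ ≤ M * ‖w‖) (hbelow : ∀ w : U, γ * ‖w‖ ≤ ‖B w‖)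
    (ℓ : V →L[ℝ] ℝ) (u : U) (hu : B u = ℓ)
    (Un : Submodule ℝ U) (un : U)
    (hmin : ∀ wn ∈ Un, ‖ℓ - B un‖ ≤ ‖ℓ - B wn‖) :
    ∀ wn ∈ Un, ‖u - un‖ ≤ (M / γ) * ‖u - wn‖ := by
  intro wn hwn
  rw [div_mul_eq_mul_div, le_div_iff₀ hγ, mul_comm]
  exact mul_norm_sub_le_of_norm_residual_le B hbound hbelow hu (hmin wn hwn)

/-- Quasi-best approximation for residual minimization: if `B : U → V'` is bounded above
and below and `u_n` minimizes the residual `‖ℓ - B w_n‖` over a subspace `U_n`, then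
`‖u - u_n‖ ≤ (M/γ) ‖u - w_n‖` for every `w_n ∈ U_n`, where `B u = ℓ`. -/
theorem statement11 {U V : Type*} [NormedAddCommGroup U] [NormedSpace ℝ U]
    [NormedAddCommGroup V] [NormedSpace ℝ V]
    (B : U →L[ℝ] V →L[ℝ] ℝ) (M γ : ℝ) (hM : 0 < M) (hγ : 0 < γ)
    (hbound : ∀ w : U, ‖B w‖ ≤ M * ‖w‖) (hbelow : ∀ w : U, γ * ‖w‖ ≤ ‖B w‖)
    (ℓ : V →L[ℝ] ℝ) (u : U) (hu : B u = ℓ)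
    (Un : Submodule ℝ U) (un : U) (hun : un ∈ Un)
    (hmin : ∀ wn ∈ Un, ‖ℓ - B un‖ ≤ ‖ℓ - B wn‖) :
    ∀ wn ∈ Un, ‖u - un‖ ≤ (M / γ) * ‖u - wn‖ :=
  statement11_general B M γ hγ hbound hbelow ℓ u hu Un un hmin
end

section
/- Let U and V be real normed spaces, let B : U → V' be a continuous linear operator, let ℓ ∈ V', let U_n ⊆ U be a subspace, and let w be a weight function. Suppose (r, u_n) ∈ V × U_n solves the exact mixed system, i.e. the functional ℓ - Bu_n ∈ V' belongs to the duality set of weight w at r (that is, (ℓ - Bu_n)(r) = ‖r‖_V·‖ℓ - Bu_n‖_{V'} and ‖ℓ - Bu_n‖_{V'} = w(‖r‖_V)), and (Bw_n)(r) = 0 for all w_n ∈ U_n. Then u_n minimizes the residual over U_n: ‖ℓ - Bu_n‖_{V'} ≤ ‖ℓ - Bw_n‖_{V'} for all w_n ∈ U_n. -/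
/-! A functional `f` attaining its norm at `r ≠ 0` has the least norm among all functionals
agreeing with `f` at `r`. Here `ℓ - B wₙ` and `ℓ - B uₙ` agree at `r` by the orthogonality
condition, and the case `r = 0` is settled by `w 0 = 0`. -/

theorem ContinuousLinearMap.norm_le_of_apply_eq_of_norming {V : Type*}
    [NormedAddCommGroup V] [NormedSpace ℝ V] {f g : V →L[ℝ] ℝ} {r : V} (hr : r ≠ 0)
    (hf : f r = ‖r‖ * ‖f‖) (hfg : f r = g r) : ‖f‖ ≤ ‖g‖ := by
  refine le_of_mul_le_mul_left ?_ (norm_pos_iff.mpr hr)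
  calc ‖r‖ * ‖f‖ = g r := hf.symm.trans hfg
    _ ≤ ‖g r‖ := le_abs_self _
    _ ≤ ‖r‖ * ‖g‖ := (g.le_opNorm r).trans_eq (mul_comm _ _)

/-- If `(r, u_n) ∈ V × U_n` solves the exact mixed system, i.e. `ℓ - B u_n` lies in the
duality set of weight `w` at `r` and `(B w_n)(r) = 0` for all `w_n ∈ U_n`, then `u_n`
minimizes the residual `‖ℓ - B w_n‖_{V'}` over `U_n`. -/
theorem statement13 {U V : Type*} [NormedAddCommGroup U] [NormedSpace ℝ U]
    [NormedAddCommGroup V] [NormedSpace ℝ V]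
    (B : U →L[ℝ] V →L[ℝ] ℝ) (ℓ : V →L[ℝ] ℝ) (Un : Submodule ℝ U)
    (w : ℝ → ℝ) (hw : IsWeightFun w)
    (r : V) (un : U) (hun : un ∈ Un)
    (hdual₁ : (ℓ - B un) r = ‖r‖ * ‖ℓ - B un‖)
    (hdual₂ : ‖ℓ - B un‖ = w ‖r‖)
    (horth : ∀ wn ∈ Un, B wn r = 0) :
    ∀ wn ∈ Un, ‖ℓ - B un‖ ≤ ‖ℓ - B wn‖ := by
  intro wn hwn
  rcases eq_or_ne r 0 with rfl | hr
  · rw [hdual₂, norm_zero, hw.2.2.1]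
    exact norm_nonneg _
  · refine ContinuousLinearMap.norm_le_of_apply_eq_of_norming hr hdual₁ ?_
    simp only [sub_apply, horth un hun, horth wn hwn]
end

section
/- (A priori bound for the inexact method via a Fortin operator) Let U and V be real normed spaces, let B : U → V' be continuous linear with constants M, γ > 0 such that ‖Bw‖_{V'} ≤ M‖w‖_U and γ‖w‖_U ≤ ‖Bw‖_{V'} for all w ∈ U. Let ℓ ∈ V' and u ∈ U with Bu = ℓ, let U_n ⊆ U and V_m ⊆ V be subspaces, and suppose Π : V → V is a continuous linear operator with range contained in V_m satisfying the Fortin condition (Bw_n)(v - Πv) = 0 for all w_n ∈ U_n and v ∈ V, together with ‖Πv‖ ≤ C_Π‖v‖ and ‖v - Πv‖ ≤ C_I‖v‖ for all v ∈ V. For f ∈ V' define the discrete dual seminorm p(f) := sup{|f(v_m)| : v_m ∈ V_m, ‖v_m‖_V ≤ 1}. If u_n ∈ U_n satisfies p(ℓ - Bu_n) ≤ p(ℓ - Bw_n) for all w_n ∈ U_n, then ‖u - u_n‖_U ≤ ((C_Π + C_I)·M/γ)·‖u - w_n‖_U for every w_n ∈ U_n. -/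
/-!
The discrete dual seminorm `p` is the operator norm of the restriction to `V_m`. Split
`v = Π v + (v - Π v)`: on `Π v ∈ V_m` the residual `ℓ - B u_n` is controlled by `p`, hence by
quasi-minimality and continuity by `M ‖u - w_n‖ ‖Π v‖`; on `v - Π v` the Fortin condition lets
us replace `B u_n` by `B w_n`, so the residual there equals `B (u - w_n)`. This bounds
`‖B (u - u_n)‖ = ‖ℓ - B u_n‖` by `(C_Π + C_I) M ‖u - w_n‖`, and inf-sup stability divides by `γ`.
-/

section DiscreteDualNorm

variable {V : Type*} [NormedAddCommGroup V] [NormedSpace ℝ V]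

theorem sSup_abs_apply_submodule_eq_norm_comp_subtypeL (Vm : Submodule ℝ V)
    (f : V →L[ℝ] ℝ) :
    sSup {x : ℝ | ∃ vm : V, vm ∈ Vm ∧ ‖vm‖ ≤ 1 ∧ x = |f vm|} = ‖f.comp Vm.subtypeL‖ := by
  rw [← (f.comp Vm.subtypeL).sSup_unitClosedBall_eq_norm]
  congr 1
  ext x
  simp only [Set.mem_ofPred_eq, Set.mem_image, Metric.mem_closedBall, dist_zero_right,
    ContinuousLinearMap.comp_apply, Submodule.subtypeL_apply, Real.norm_eq_abs]
  constructor
  · rintro ⟨vm, hvm, hle, rfl⟩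
    exact ⟨⟨vm, hvm⟩, hle, rfl⟩
  · rintro ⟨vm, hle, rfl⟩
    exact ⟨vm, vm.2, hle, rfl⟩

theorem norm_comp_subtypeL_le (Vm : Submodule ℝ V) (f : V →L[ℝ] ℝ) :
    ‖f.comp Vm.subtypeL‖ ≤ ‖f‖ :=
  (f.opNorm_comp_le _).trans <|
    mul_le_of_le_one_right (norm_nonneg f) (Submodule.norm_subtypeL_le Vm)

end DiscreteDualNorm

theorem nonneg_of_forall_norm_le_mul_norm {E F : Type*} [NormedAddCommGroup E] [Nontrivial E]
    [NormedAddCommGroup F] {g : E → F} {C : ℝ} (h : ∀ v, ‖g v‖ ≤ C * ‖v‖) : 0 ≤ C := by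
  obtain ⟨v, hv⟩ := exists_ne (0 : E)
  exact nonneg_of_mul_nonneg_left ((norm_nonneg _).trans (h v)) (norm_pos_iff.mpr hv)

theorem norm_le_of_apply_sub_proj_eq {V : Type*} [NormedAddCommGroup V] [NormedSpace ℝ V]
    (Vm : Submodule ℝ V) (Proj : V →L[ℝ] V) (hrange : ∀ v : V, Proj v ∈ Vm)
    {CP CI : ℝ} (hCP₀ : 0 ≤ CP) (hCI₀ : 0 ≤ CI)
    (hCP : ∀ v : V, ‖Proj v‖ ≤ CP * ‖v‖) (hCI : ∀ v : V, ‖v - Proj v‖ ≤ CI * ‖v‖)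
    {f g : V →L[ℝ] ℝ} (hfg : ∀ v : V, f (v - Proj v) = g (v - Proj v)) :
    ‖f‖ ≤ CP * ‖f.comp Vm.subtypeL‖ + CI * ‖g‖ := by
  refine f.opNorm_le_bound (by positivity) fun v => ?_
  have hrestrict : ‖f (Proj v)‖ ≤ ‖f.comp Vm.subtypeL‖ * ‖Proj v‖ :=
    (f.comp Vm.subtypeL).le_opNorm ⟨Proj v, hrange v⟩
  calc ‖f v‖ = ‖f (Proj v) + g (v - Proj v)‖ := by rw [← hfg, ← map_add, add_sub_cancel]
    _ ≤ ‖f (Proj v)‖ + ‖g (v - Proj v)‖ := norm_add_le _ _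
    _ ≤ ‖f.comp Vm.subtypeL‖ * (CP * ‖v‖) + ‖g‖ * (CI * ‖v‖) := by
      gcongr
      · exact hrestrict.trans (by gcongr; exact hCP v)
      · exact (g.le_opNorm _).trans (by gcongr; exact hCI v)
    _ = (CP * ‖f.comp Vm.subtypeL‖ + CI * ‖g‖) * ‖v‖ := by ring

theorem statement14_general {U V : Type*} [NormedAddCommGroup U] [NormedSpace ℝ U]
    [NormedAddCommGroup V] [NormedSpace ℝ V]
    (B : U →L[ℝ] V →L[ℝ] ℝ) (M γ : ℝ) (hγ : 0 < γ)
    (hbound : ∀ w : U, ‖B w‖ ≤ M * ‖w‖) (hbelow : ∀ w : U, γ * ‖w‖ ≤ ‖B w‖)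
    (ℓ : V →L[ℝ] ℝ) (u : U) (hu : B u = ℓ)
    (Un : Submodule ℝ U) (Vm : Submodule ℝ V)
    (Proj : V →L[ℝ] V) (hrange : ∀ v : V, Proj v ∈ Vm)
    (hFortin : ∀ wn ∈ Un, ∀ v : V, B wn (v - Proj v) = 0)
    (CP CI : ℝ)
    (hCP : ∀ v : V, ‖Proj v‖ ≤ CP * ‖v‖) (hCI : ∀ v : V, ‖v - Proj v‖ ≤ CI * ‖v‖)
    (p : (V →L[ℝ] ℝ) → ℝ)
    (hp : ∀ f : V →L[ℝ] ℝ,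
      p f = sSup {x : ℝ | ∃ vm : V, vm ∈ Vm ∧ ‖vm‖ ≤ 1 ∧ x = |f vm|})
    (un : U) (hun : un ∈ Un)
    (hmin : ∀ wn ∈ Un, p (ℓ - B un) ≤ p (ℓ - B wn)) :
    ∀ wn ∈ Un, ‖u - un‖ ≤ ((CP + CI) * M / γ) * ‖u - wn‖ := by
  intro wn hwn
  -- `C_Π, C_I ≥ 0` only follow from their defining bounds when `V ≠ 0`; for `V = 0`, the
  -- lower bound `γ ‖w‖ ≤ ‖B w‖ = 0` makes `U = 0`.
  rcases subsingleton_or_nontrivial V with hV | hV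
  · have hU : ∀ w : U, ‖w‖ = 0 := fun w => by
      have := hbelow w
      rw [Subsingleton.elim (B w) 0, norm_zero] at this
      exact le_antisymm (nonpos_of_mul_nonpos_right this hγ) (norm_nonneg w)
    simp [hU]
  have hp_eq : ∀ f, p f = ‖f.comp Vm.subtypeL‖ := fun f =>
    (hp f).trans (sSup_abs_apply_submodule_eq_norm_comp_subtypeL Vm f)
  have hresidual : ‖ℓ - B wn‖ ≤ M * ‖u - wn‖ := by rw [← hu, ← map_sub]; exact hbound _
  have hdiscrete : ‖(ℓ - B un).comp Vm.subtypeL‖ ≤ M * ‖u - wn‖ :=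
    calc ‖(ℓ - B un).comp Vm.subtypeL‖ = p (ℓ - B un) := (hp_eq _).symm
      _ ≤ p (ℓ - B wn) := hmin wn hwn
      _ = ‖(ℓ - B wn).comp Vm.subtypeL‖ := hp_eq _
      _ ≤ M * ‖u - wn‖ := (norm_comp_subtypeL_le Vm _).trans hresidual
  have hCP₀ : 0 ≤ CP := nonneg_of_forall_norm_le_mul_norm hCP
  have hCI₀ : 0 ≤ CI := nonneg_of_forall_norm_le_mul_norm hCI
  have hsplit : ‖ℓ - B un‖ ≤ CP * ‖(ℓ - B un).comp Vm.subtypeL‖ + CI * ‖ℓ - B wn‖ :=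
    norm_le_of_apply_sub_proj_eq Vm Proj hrange hCP₀ hCI₀ hCP hCI fun v => by
        simp [hFortin un hun, hFortin wn hwn]
  have hstable : γ * ‖u - un‖ ≤ (CP + CI) * M * ‖u - wn‖ :=
    calc γ * ‖u - un‖ ≤ ‖ℓ - B un‖ := by rw [← hu, ← map_sub]; exact hbelow _
      _ ≤ CP * (M * ‖u - wn‖) + CI * (M * ‖u - wn‖) := hsplit.trans (by gcongr)
      _ = (CP + CI) * M * ‖u - wn‖ := by ring
  rw [div_mul_eq_mul_div, le_div_iff₀ hγ]
  linarith

/-- A priori bound for the inexact method via a Fortin operator: if `Proj : V → V_m` is a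
continuous linear operator satisfying the Fortin condition with bounds `C_Π` and `C_I`,
and `u_n ∈ U_n` minimizes the discrete dual residual
`p(f) = sup {|f(v_m)| : v_m ∈ V_m, ‖v_m‖ ≤ 1}` over `U_n`, then
`‖u - u_n‖ ≤ ((C_Π + C_I) M / γ) ‖u - w_n‖` for all `w_n ∈ U_n`. -/
theorem statement14 {U V : Type*} [NormedAddCommGroup U] [NormedSpace ℝ U]
    [NormedAddCommGroup V] [NormedSpace ℝ V]
    (B : U →L[ℝ] V →L[ℝ] ℝ) (M γ : ℝ) (hM : 0 < M) (hγ : 0 < γ)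
    (hbound : ∀ w : U, ‖B w‖ ≤ M * ‖w‖) (hbelow : ∀ w : U, γ * ‖w‖ ≤ ‖B w‖)
    (ℓ : V →L[ℝ] ℝ) (u : U) (hu : B u = ℓ)
    (Un : Submodule ℝ U) (Vm : Submodule ℝ V)
    (Proj : V →L[ℝ] V) (hrange : ∀ v : V, Proj v ∈ Vm)
    (hFortin : ∀ wn ∈ Un, ∀ v : V, B wn (v - Proj v) = 0)
    (CP CI : ℝ)
    (hCP : ∀ v : V, ‖Proj v‖ ≤ CP * ‖v‖) (hCI : ∀ v : V, ‖v - Proj v‖ ≤ CI * ‖v‖)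
    (p : (V →L[ℝ] ℝ) → ℝ)
    (hp : ∀ f : V →L[ℝ] ℝ,
      p f = sSup {x : ℝ | ∃ vm : V, vm ∈ Vm ∧ ‖vm‖ ≤ 1 ∧ x = |f vm|})
    (un : U) (hun : un ∈ Un)
    (hmin : ∀ wn ∈ Un, p (ℓ - B un) ≤ p (ℓ - B wn)) :
    ∀ wn ∈ Un, ‖u - un‖ ≤ ((CP + CI) * M / γ) * ‖u - wn‖ :=
  statement14_general B M γ hγ hbound hbelow ℓ u hu Un Vm Proj hrange hFortin CP CI hCP hCI p hp un
    hun hmin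
end

section
/- (Optimal test norm yields unit constants) Let U and V be real normed spaces with U nontrivial, let b : U × V → ℝ be a continuous bilinear form, and let B : U → V' and B' : V → U' be the induced operators, (Bw)(v) = b(w,v) = (B'v)(w). Assume B' : V → U' is surjective. Then for every w ∈ U, sup{ b(w,v)/‖B'v‖_{U'} : v ∈ V, B'v ≠ 0 } = ‖w‖_U; that is, with the optimal test norm ‖v‖_opt := ‖B'v‖_{U'} on V, the inf-sup and continuity constants of b both equal 1. -/
/-- Optimal test norm yields unit constants: if the induced operators `B : U → V'` and
`B' : V → U'` of a continuous bilinear form satisfy `(B w)(v) = (B' v)(w)` and `B'` is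
surjective, then for every `w ∈ U`,
`sup { b(w,v)/‖B' v‖ : v ∈ V, B' v ≠ 0 } = ‖w‖`. -/
theorem statement15 {U V : Type*} [NormedAddCommGroup U] [NormedSpace ℝ U] [Nontrivial U]
    [NormedAddCommGroup V] [NormedSpace ℝ V]
    (B : U →L[ℝ] V →L[ℝ] ℝ) (B' : V →L[ℝ] U →L[ℝ] ℝ)
    (hBB' : ∀ (w : U) (v : V), B w v = B' v w)
    (hsurj : Function.Surjective ⇑B')
    (w : U) :
    sSup {x : ℝ | ∃ v : V, B' v ≠ 0 ∧ x = B w v / ‖B' v‖} = ‖w‖ := by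
  have hmem : ‖w‖ ∈ {x : ℝ | ∃ v : V, B' v ≠ 0 ∧ x = B w v / ‖B' v‖} := by
    rcases eq_or_ne w 0 with rfl | hw
    · obtain ⟨u, hu⟩ := exists_ne (0 : U)
      obtain ⟨f, hf1, hfu⟩ := exists_dual_vector ℝ u (norm_ne_zero_iff.mpr hu)
      obtain ⟨v, rfl⟩ := hsurj f
      refine ⟨v, ?_, by simp⟩
      intro h
      rw [h] at hf1
      simp at hf1
    · obtain ⟨f, hf1, hfu⟩ := exists_dual_vector ℝ w (norm_ne_zero_iff.mpr hw)
      obtain ⟨v, rfl⟩ := hsurj f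
      refine ⟨v, ?_, ?_⟩
      · intro h
        rw [h] at hf1
        simp at hf1
      · rw [hBB' w v, hf1, div_one]
        simpa using hfu.symm
  refine IsGreatest.csSup_eq ⟨hmem, ?_⟩
  rintro x ⟨v, hv, rfl⟩
  have hpos : (0:ℝ) < ‖B' v‖ := norm_pos_iff.mpr hv
  rw [div_le_iff₀ hpos, hBB' w v]
  calc B' v w ≤ ‖B' v w‖ := le_abs_self _
    _ ≤ ‖B' v‖ * ‖w‖ := (B' v).le_opNorm w
    _ = ‖w‖ * ‖B' v‖ := mul_comm _ _
end
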